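/- arXiv:1508.05460 — 6 statements merged into one kernel-verified Lean document; each statement's English description precedes it below -/
import Mathlib

section
/- For any continuous f: ℝ^k → ℝ with ‖f‖_ω < ∞, one has inf_{c ∈ ℝ} ‖f + c‖_ω = ‖f‖_{ω-span}. Moreover the infimum is attained, e.g. at c₁ = −inf_x { f(x) + (1+ω(x))‖f‖_{ω-span} }. -/
open Set

noncomputable def wnorm {k : ℕ} (ω f : (Fin k → ℝ) → ℝ) : ℝ :=
  ⨆ x, |f x| / (1 + ω x)

noncomputable def wspan {k : ℕ} (ω f : (Fin k → ℝ) → ℝ) : ℝ :=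
  ⨆ p : (Fin k → ℝ) × (Fin k → ℝ), (f p.1 - f p.2) / (2 + ω p.1 + ω p.2)

theorem stmt2 (k : ℕ) (ω : (Fin k → ℝ) → ℝ) (hωc : Continuous ω)
    (hω0 : ∀ x, 0 ≤ ω x)
    (f : (Fin k → ℝ) → ℝ) (hfc : Continuous f)
    (hf : BddAbove (Set.range fun x => |f x| / (1 + ω x))) :
    (⨅ c : ℝ, wnorm ω (fun x => f x + c)) = wspan ω f ∧
    wnorm ω (fun x => f x + (-(⨅ x, f x + (1 + ω x) * wspan ω f))) = wspan ω f := by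
  simp only [wnorm, wspan]
  set S := ⨆ p : (Fin k → ℝ) × (Fin k → ℝ), (f p.1 - f p.2) / (2 + ω p.1 + ω p.2) with hS
  set M := ⨆ x, |f x| / (1 + ω x) with hMdef
  have hpos : ∀ x, (0:ℝ) < 1 + ω x := fun x => by have := hω0 x; linarith
  have hpos2 : ∀ x y, (0:ℝ) < 2 + ω x + ω y := fun x y => by
    have := hω0 x; have := hω0 y; linarith
  have hM : ∀ x, |f x| ≤ (1 + ω x) * M := by
    intro x
    have h := le_ciSup hf x
    rw [← hMdef, div_le_iff₀ (hpos x)] at h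
    linarith
  have hSbdd : BddAbove (range fun p : (Fin k → ℝ) × (Fin k → ℝ) =>
      (f p.1 - f p.2) / (2 + ω p.1 + ω p.2)) := by
    refine ⟨M, ?_⟩
    rintro _ ⟨p, rfl⟩
    rw [div_le_iff₀ (hpos2 p.1 p.2)]
    have h1 := hM p.1
    have h2 := hM p.2
    have := le_abs_self (f p.1)
    have := neg_abs_le (f p.2)
    nlinarith
  have hspan : ∀ x y, f x - f y ≤ (2 + ω x + ω y) * S := by
    intro x y
    have h := le_ciSup hSbdd (x, y)
    rw [← hS, div_le_iff₀ (hpos2 x y)] at h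
    linarith
  have hS0 : (0:ℝ) ≤ S := by
    have h := le_ciSup hSbdd ((fun _ => 0), (fun _ => 0))
    rw [← hS] at h
    simpa using h
  have hIbdd : BddBelow (range fun x => f x + (1 + ω x) * S) := by
    refine ⟨f (fun _ => 0) - (1 + ω (fun _ => 0)) * S, ?_⟩
    rintro _ ⟨x, rfl⟩
    dsimp only
    have h := hspan (fun _ => 0) x
    nlinarith
  set I := ⨅ x, f x + (1 + ω x) * S with hI
  have hIle : ∀ x, I ≤ f x + (1 + ω x) * S := fun x => ciInf_le hIbdd x
  have hleI : ∀ x, f x - (1 + ω x) * S ≤ I := by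
    intro x
    apply le_ciInf
    intro y
    have := hspan x y
    linarith
  have key : ∀ x, |f x + (-I)| / (1 + ω x) ≤ S := by
    intro x
    rw [div_le_iff₀ (hpos x), abs_le]
    constructor <;>
      · have h1 := hIle x; have h2 := hleI x; linarith
  have hlow : ∀ c : ℝ, S ≤ ⨆ x, |f x + c| / (1 + ω x) := by
    intro c
    have hbddc : BddAbove (range fun x => |f x + c| / (1 + ω x)) := by
      refine ⟨M + |c|, ?_⟩
      rintro _ ⟨x, rfl⟩
      rw [div_le_iff₀ (hpos x)]
      have h1 := hM x
      have h2 := abs_add_le (f x) c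
      have h3 := hω0 x
      have h4 := abs_nonneg c
      nlinarith
    have hNle : ∀ x, |f x + c| ≤ (1 + ω x) * (⨆ x, |f x + c| / (1 + ω x)) := by
      intro x
      have h := le_ciSup hbddc x
      rw [div_le_iff₀ (hpos x)] at h
      linarith
    apply ciSup_le
    intro p
    rw [div_le_iff₀ (hpos2 p.1 p.2)]
    have h1 := hNle p.1
    have h2 := hNle p.2
    have h3 := le_abs_self (f p.1 + c)
    have h4 := neg_abs_le (f p.2 + c)
    linarith
  have hattain : (⨆ x, |f x + (-I)| / (1 + ω x)) = S :=
    le_antisymm (ciSup_le key) (hlow (-I))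
  refine ⟨le_antisymm ?_ (le_ciInf hlow), hattain⟩
  have hbddB : BddBelow (range fun c => ⨆ x, |f x + c| / (1 + ω x)) :=
    ⟨S, by rintro _ ⟨c, rfl⟩; exact hlow c⟩
  exact ciInf_le_of_le hbddB (-I) (le_of_eq hattain)
end

section
/- Let f with ‖f‖_ω < ∞ and define c₁ = −inf_x { f(x) + (1+ω(x))‖f‖_{ω-span} } and c₂ = −sup_x { f(x) − (1+ω(x))‖f‖_{ω-span} }. Then for c ∈ ℝ, ‖f + c‖_ω = ‖f‖_{ω-span} if and only if c ∈ [c₁, c₂]. -/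
open Set

theorem stmt4 (k : ℕ) (ω : (Fin k → ℝ) → ℝ) (hωc : Continuous ω)
    (hω0 : ∀ x, 0 ≤ ω x)
    (f : (Fin k → ℝ) → ℝ) (hfc : Continuous f)
    (hf : BddAbove (Set.range fun x => |f x| / (1 + ω x)))
    (c : ℝ) :
    wnorm ω (fun x => f x + c) = wspan ω f ↔
      c ∈ Set.Icc (-(⨅ x, f x + (1 + ω x) * wspan ω f))
                  (-(⨆ x, f x - (1 + ω x) * wspan ω f)) := by
  classical
  set s : ℝ := wspan ω f with hs
  set M : ℝ := wnorm ω f with hM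
  have hpos : ∀ x, (0:ℝ) < 1 + ω x := fun x => by linarith [hω0 x]
  have hbound : ∀ x, |f x| ≤ M * (1 + ω x) := by
    intro x
    have h1 : |f x| / (1 + ω x) ≤ M := le_ciSup hf x
    have := hpos x
    calc |f x| = |f x| / (1 + ω x) * (1 + ω x) := by field_simp
    _ ≤ M * (1 + ω x) := by nlinarith
  have hB : BddAbove (Set.range fun p : (Fin k → ℝ) × (Fin k → ℝ) =>
      (f p.1 - f p.2) / (2 + ω p.1 + ω p.2)) := by
    refine ⟨M, ?_⟩
    rintro _ ⟨⟨x, y⟩, rfl⟩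
    have h2 : (0:ℝ) < 2 + ω x + ω y := by linarith [hω0 x, hω0 y]
    rw [div_le_iff₀ h2]
    have hx := abs_le.1 (hbound x)
    have hy := abs_le.1 (hbound y)
    nlinarith
  have hsdef : s = ⨆ p : (Fin k → ℝ) × (Fin k → ℝ),
      (f p.1 - f p.2) / (2 + ω p.1 + ω p.2) := rfl
  have hspan : ∀ x y, f x - f y ≤ s * (2 + ω x + ω y) := by
    intro x y
    have h2 : (0:ℝ) < 2 + ω x + ω y := by linarith [hω0 x, hω0 y]
    have h3 : (f x - f y) / (2 + ω x + ω y) ≤ s := by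
      rw [hsdef]; exact le_ciSup hB (x, y)
    rw [div_le_iff₀ h2] at h3
    linarith
  -- key ordering
  have hkey : ∀ x y, f x - (1 + ω x) * s ≤ f y + (1 + ω y) * s := by
    intro x y
    have := hspan x y
    nlinarith
  set d : Fin k → ℝ := fun _ => 0 with hd
  have hs0 : 0 ≤ s := by
    have h3 : (f d - f d) / (2 + ω d + ω d) ≤ s := by
      rw [hsdef]; exact le_ciSup hB (d, d)
    simpa using h3
  have hbA : BddAbove (Set.range fun x => f x - (1 + ω x) * s) :=
    ⟨f d + (1 + ω d) * s, by rintro _ ⟨x, rfl⟩; exact hkey x d⟩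
  have hbB : BddBelow (Set.range fun x => f x + (1 + ω x) * s) :=
    ⟨f d - (1 + ω d) * s, by rintro _ ⟨x, rfl⟩; exact hkey d x⟩
  have hwn_bdd : BddAbove (Set.range fun x => |f x + c| / (1 + ω x)) := by
    refine ⟨M + |c|, ?_⟩
    rintro _ ⟨x, rfl⟩
    have := hpos x
    rw [div_le_iff₀ this]
    have h1 := hbound x
    have h2 : |f x + c| ≤ |f x| + |c| := abs_add_le _ _
    have h3 : |c| ≤ |c| * (1 + ω x) := by nlinarith [abs_nonneg c, hω0 x]
    nlinarith
  have hNdef : wnorm ω (fun x => f x + c) = ⨆ x, |f x + c| / (1 + ω x) := rfl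
  -- lower bound: s ≤ wnorm (f + c)
  have hlow : s ≤ wnorm ω (fun x => f x + c) := by
    set N := wnorm ω (fun x => f x + c) with hN
    have habs : ∀ x, |f x + c| ≤ N * (1 + ω x) := by
      intro x
      have h1 : |f x + c| / (1 + ω x) ≤ N := le_ciSup hwn_bdd x
      have := hpos x
      calc |f x + c| = |f x + c| / (1 + ω x) * (1 + ω x) := by field_simp
      _ ≤ N * (1 + ω x) := by nlinarith
    rw [hsdef]
    refine ciSup_le ?_
    rintro ⟨x, y⟩
    have h2 : (0:ℝ) < 2 + ω x + ω y := by linarith [hω0 x, hω0 y]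
    rw [div_le_iff₀ h2]
    have hx := abs_le.1 (habs x)
    have hy := abs_le.1 (habs y)
    nlinarith
  constructor
  · intro heq
    have habs : ∀ x, |f x + c| ≤ s * (1 + ω x) := by
      intro x
      have h1 : |f x + c| / (1 + ω x) ≤ s := by
        rw [← heq, hNdef]; exact le_ciSup hwn_bdd x
      have := hpos x
      calc |f x + c| = |f x + c| / (1 + ω x) * (1 + ω x) := by field_simp
      _ ≤ s * (1 + ω x) := by nlinarith
    constructor
    · have h1 : -c ≤ ⨅ x, f x + (1 + ω x) * s := by
        refine le_ciInf ?_
        intro x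
        have := abs_le.1 (habs x)
        nlinarith [this.1]
      linarith
    · have h1 : (⨆ x, f x - (1 + ω x) * s) ≤ -c := by
        refine ciSup_le ?_
        intro x
        have := abs_le.1 (habs x)
        nlinarith [this.2]
      linarith
  · rintro ⟨h1, h2⟩
    refine le_antisymm ?_ hlow
    rw [hNdef]
    refine ciSup_le ?_
    intro x
    have := hpos x
    rw [div_le_iff₀ this]
    have hA : (⨅ y, f y + (1 + ω y) * s) ≤ f x + (1 + ω x) * s := ciInf_le hbB x
    have hBx : f x - (1 + ω x) * s ≤ ⨆ y, f y - (1 + ω y) * s := le_ciSup hbA x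
    rw [abs_le]
    constructor <;> nlinarith
end

section
/- For any f with ‖f‖_ω < ∞ there exists c₀ ∈ ℝ such that sup_x (f(x)+c₀)/(1+ω(x)) = −inf_x (f(x)+c₀)/(1+ω(x)) = ‖f‖_{ω-span}. -/
open Set

open scoped NNReal

/-! Put `u = 1 + ω ≥ 1`. For every `c`, the pair quotient `(f x - f y) / (u x + u y)` is the
mediant of `(f x + c) / u x` and `(-f y - c) / u y`, so `wspan ω f` equals the common value of
`sup (f + c) / u` and `sup (-f - c) / u` as soon as these two agree. Their difference is continuous
in `c` (each supremum is `1`-Lipschitz because `u ≥ 1`) and changes sign for `|c|` large, so the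
intermediate value theorem supplies such a `c`. -/

theorem add_div_add_le_of_div_le_of_div_le {a b p q t : ℝ} (hp : 0 < p) (hq : 0 < q)
    (ha : a / p ≤ t) (hb : b / q ≤ t) : (a + b) / (p + q) ≤ t := by
  rw [div_le_iff₀ hp] at ha
  rw [div_le_iff₀ hq] at hb
  rw [div_le_iff₀ (add_pos hp hq)]
  linarith

theorem lt_add_div_add_of_lt_div_of_lt_div {a b p q t : ℝ} (hp : 0 < p) (hq : 0 < q)
    (ha : t < a / p) (hb : t < b / q) : t < (a + b) / (p + q) := by
  rw [lt_div_iff₀ hp] at ha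
  rw [lt_div_iff₀ hq] at hb
  rw [lt_div_iff₀ (add_pos hp hq)]
  linarith

theorem lipschitzWith_ciSup {α ι : Type*} [PseudoMetricSpace α] [Nonempty ι] {F : ι → α → ℝ}
    {K : ℝ≥0} (hF : ∀ i, LipschitzWith K (F i)) (hbdd : ∀ a, BddAbove (range fun i => F i a)) :
    LipschitzWith K fun a => ⨆ i, F i a :=
  LipschitzWith.of_le_add_mul K fun a b => ciSup_le fun i =>
    ((hF i).le_add_mul a b).trans (add_le_add_left (le_ciSup (hbdd b) i) _)

theorem lipschitzWith_one_add_div {a p : ℝ} (hp : 1 ≤ p) :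
    LipschitzWith 1 fun c : ℝ => (a + c) / p :=
  LipschitzWith.of_dist_le_mul fun c d => by
    rw [Real.dist_eq, Real.dist_eq, ← sub_div, add_sub_add_left_eq_sub, abs_div,
      abs_of_pos (zero_lt_one.trans_le hp), NNReal.coe_one, one_mul]
    exact div_le_self (abs_nonneg _) hp

section WeightedQuotients

variable {X : Type*} {u : X → ℝ}

theorem ciSup_add_div_add_eq [Nonempty X] (hu : ∀ x, 0 < u x) {a b : X → ℝ} {t : ℝ}
    (ha : BddAbove (range fun x => a x / u x)) (hb : BddAbove (range fun x => b x / u x))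
    (hat : ⨆ x, a x / u x = t) (hbt : ⨆ x, b x / u x = t) :
    ⨆ p : X × X, (a p.1 + b p.2) / (u p.1 + u p.2) = t := by
  have hle : ∀ p : X × X, (a p.1 + b p.2) / (u p.1 + u p.2) ≤ t := fun p =>
    add_div_add_le_of_div_le_of_div_le (hu p.1) (hu p.2)
      (hat ▸ le_ciSup ha p.1) (hbt ▸ le_ciSup hb p.2)
  refine le_antisymm (ciSup_le hle) (le_of_forall_lt fun s hs => ?_)
  obtain ⟨x, hx⟩ := exists_lt_of_lt_ciSup (hat ▸ hs)
  obtain ⟨y, hy⟩ := exists_lt_of_lt_ciSup (hbt ▸ hs)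
  exact (lt_add_div_add_of_lt_div_of_lt_div (hu x) (hu y) hx hy).trans_le
    (le_ciSup ⟨t, forall_mem_range.2 hle⟩ (x, y))

variable {h : X → ℝ}

theorem bddAbove_range_add_div (hu : ∀ x, 1 ≤ u x) (hh : BddAbove (range fun x => |h x| / u x))
    (c : ℝ) : BddAbove (range fun x => (h x + c) / u x) := by
  obtain ⟨B, hB⟩ := hh
  refine ⟨B + |c|, forall_mem_range.2 fun x => ?_⟩
  have hux : 0 < u x := zero_lt_one.trans_le (hu x)
  calc (h x + c) / u x = h x / u x + c / u x := add_div _ _ _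
    _ ≤ |h x| / u x + |c| := add_le_add (div_le_div_of_nonneg_right (le_abs_self _) hux.le)
        ((div_le_self (abs_nonneg c) (hu x)).trans'
          (div_le_div_of_nonneg_right (le_abs_self _) hux.le))
    _ ≤ B + |c| := add_le_add_left (hB (mem_range_self x)) _

theorem neg_ciInf_add_div (c : ℝ) : -(⨅ x, (h x + c) / u x) = ⨆ x, (-h x + -c) / u x := by
  rw [← neg_one_mul, Real.mul_iInf_of_nonpos (by norm_num)]
  congr 1 with x
  ring

theorem lipschitzWith_ciSup_add_div [Nonempty X] (hu : ∀ x, 1 ≤ u x)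
    (hh : BddAbove (range fun x => |h x| / u x)) :
    LipschitzWith 1 fun c => ⨆ x, (h x + c) / u x :=
  lipschitzWith_ciSup (fun x => lipschitzWith_one_add_div (hu x)) (bddAbove_range_add_div hu hh)

theorem ciSup_neg_add_div_le_ciSup_add_div {B : ℝ} (hu : ∀ x, 1 ≤ u x)
    (hB : ∀ x, |h x| / u x ≤ B) (x₀ : X) :
    ⨆ x, (-h x + -(2 * B * u x₀)) / u x ≤ ⨆ x, (h x + 2 * B * u x₀) / u x := by
  have : Nonempty X := ⟨x₀⟩
  have hpos : ∀ x, 0 < u x := fun x => zero_lt_one.trans_le (hu x)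
  have hB0 : 0 ≤ B := (div_nonneg (abs_nonneg _) (hpos x₀).le).trans (hB x₀)
  have hC : 0 ≤ 2 * B * u x₀ := by have := hpos x₀; positivity
  calc ⨆ x, (-h x + -(2 * B * u x₀)) / u x ≤ B := ciSup_le fun x =>
        (div_le_div_of_nonneg_right (by linarith [neg_le_abs (h x)]) (hpos x).le).trans (hB x)
    _ ≤ (h x₀ + 2 * B * u x₀) / u x₀ := by
        have := hB x₀
        rw [div_le_iff₀ (hpos x₀)] at this
        rw [le_div_iff₀ (hpos x₀)]
        linarith [neg_abs_le (h x₀)]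
    _ ≤ ⨆ x, (h x + 2 * B * u x₀) / u x :=
        le_ciSup (bddAbove_range_add_div hu ⟨B, forall_mem_range.2 hB⟩ _) x₀

theorem exists_ciSup_add_div_eq_neg_ciInf [Nonempty X] (hu : ∀ x, 1 ≤ u x)
    (hh : BddAbove (range fun x => |h x| / u x)) :
    ∃ c, ⨆ x, (h x + c) / u x = -⨅ x, (h x + c) / u x := by
  obtain ⟨B, hB⟩ := hh
  have hB : ∀ x, |h x| / u x ≤ B := fun x => hB (mem_range_self x)
  have hB' : ∀ x, |(-h) x| / u x ≤ B := by simpa only [Pi.neg_apply, abs_neg] using hB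
  obtain ⟨x₀⟩ := ‹Nonempty X›
  set C := 2 * B * u x₀
  let ψ c := (⨆ x, (h x + c) / u x) - ⨆ x, (-h x + -c) / u x
  have hψ : Continuous ψ :=
    (lipschitzWith_ciSup_add_div hu ⟨B, forall_mem_range.2 hB⟩).continuous.sub
      ((lipschitzWith_ciSup_add_div hu ⟨B, forall_mem_range.2 hB'⟩).continuous.comp continuous_neg)
  have hψC : 0 ≤ ψ C := sub_nonneg.2 (ciSup_neg_add_div_le_ciSup_add_div hu hB x₀)
  have hψC' : ψ (-C) ≤ 0 := by
    simpa only [ψ, Pi.neg_apply, neg_neg, sub_nonpos] using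
      ciSup_neg_add_div_le_ciSup_add_div hu hB' x₀
  obtain ⟨c, hc⟩ := mem_range_of_exists_le_of_exists_ge hψ ⟨-C, hψC'⟩ ⟨C, hψC⟩
  exact ⟨c, by rw [neg_ciInf_add_div]; exact sub_eq_zero.1 hc⟩

end WeightedQuotients

theorem stmt5_general (k : ℕ) (ω : (Fin k → ℝ) → ℝ)
    (hω0 : ∀ x, 0 ≤ ω x)
    (f : (Fin k → ℝ) → ℝ)
    (hf : BddAbove (Set.range fun x => |f x| / (1 + ω x))) :
    ∃ c₀ : ℝ,
      (⨆ x, (f x + c₀) / (1 + ω x)) = wspan ω f ∧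
      (-(⨅ x, (f x + c₀) / (1 + ω x))) = wspan ω f := by
  set u : (Fin k → ℝ) → ℝ := fun x => 1 + ω x
  have hu : ∀ x, 1 ≤ u x := fun x => le_add_of_nonneg_right (hω0 x)
  obtain ⟨c₀, hc₀⟩ := exists_ciSup_add_div_eq_neg_ciInf hu hf
  have hspan : wspan ω f =
      ⨆ p : (Fin k → ℝ) × (Fin k → ℝ), ((f p.1 + c₀) + (-f p.2 + -c₀)) / (u p.1 + u p.2) := by
    unfold wspan
    congr 1 with p
    simp only [u]
    ring
  have hf' : BddAbove (range fun x => |(-f) x| / u x) := by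
    simpa only [Pi.neg_apply, abs_neg] using hf
  have hsup : ⨆ x, (-f x + -c₀) / u x = ⨆ x, (f x + c₀) / u x := by
    rw [← neg_ciInf_add_div, hc₀]
  rw [ciSup_add_div_add_eq (a := fun x => f x + c₀) (b := fun x => -f x + -c₀)
    (fun x => zero_lt_one.trans_le (hu x)) (bddAbove_range_add_div hu hf c₀)
    (bddAbove_range_add_div hu hf' (-c₀)) rfl hsup] at hspan
  exact ⟨c₀, hspan.symm, hc₀ ▸ hspan.symm⟩

theorem stmt5 (k : ℕ) (ω : (Fin k → ℝ) → ℝ) (hωc : Continuous ω)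
    (hω0 : ∀ x, 0 ≤ ω x)
    (f : (Fin k → ℝ) → ℝ) (hfc : Continuous f)
    (hf : BddAbove (Set.range fun x => |f x| / (1 + ω x))) :
    ∃ c₀ : ℝ,
      (⨆ x, (f x + c₀) / (1 + ω x)) = wspan ω f ∧
      (-(⨅ x, (f x + c₀) / (1 + ω x))) = wspan ω f :=
  stmt5_general k ω hω0 f hf
end

section
/- Let f(x) = 0 for |x| ≤ 1 and f(x) = |x − 1/x| for |x| ≥ 1, and ω(x) = |x| on ℝ. Then ‖f‖_{ω-span} = 1, and the set of constants c with ‖f+c‖_ω = ‖f‖_{ω-span} is exactly [−1, 1]. -/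
open Set

/-- The example function: f(x)=0 for |x| ≤ 1 and f(x)=|x-1/x| for |x| ≥ 1. -/
noncomputable def fEx (x : ℝ) : ℝ := if |x| ≤ 1 then 0 else |x - 1/x|

lemma fEx_nonneg (x : ℝ) : 0 ≤ fEx x := by
  unfold fEx; split
  · exact le_refl 0
  · exact abs_nonneg _

lemma fEx_le (x : ℝ) : fEx x ≤ |x| := by
  unfold fEx; split
  · exact abs_nonneg x
  · next h =>
    have h1 : 1 < |x| := not_le.mp h
    rcases le_or_gt 0 x with hx | hx
    · have hx1 : 1 < x := by rwa [abs_of_nonneg hx] at h1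
      have hinv : 0 < 1/x := by positivity
      have hinv1 : 1/x ≤ 1 := by rw [div_le_one (by linarith)]; linarith
      rw [abs_of_nonneg (by linarith : (0:ℝ) ≤ x)]
      rw [abs_le]; constructor <;> nlinarith
    · have hx1 : x < -1 := by rw [abs_of_neg hx] at h1; linarith
      have hinv : 1/x < 0 := by apply div_neg_of_pos_of_neg one_pos; linarith
      have hinv1 : -1 ≤ 1/x := by
        rw [le_div_iff_of_neg (by linarith : x < 0)]; linarith
      rw [abs_of_neg hx, abs_le]; constructor <;> nlinarith

lemma fEx_ge (x : ℝ) : |x| - 1 ≤ fEx x := by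
  unfold fEx; split
  · next h => linarith
  · next h =>
    have h1 : 1 < |x| := not_le.mp h
    have key : |x| - |1/x| ≤ |x - 1/x| := abs_sub_abs_le_abs_sub _ _
    have : |1/x| ≤ 1 := by
      rw [abs_div, abs_one, div_le_one (by linarith)]; linarith
    linarith

lemma fEx_one : fEx (1 : ℝ) = 0 := by unfold fEx; norm_num

lemma fEx_zero : fEx (0 : ℝ) = 0 := by unfold fEx; norm_num

theorem stmt6 :
    (⨆ p : ℝ × ℝ, (fEx p.1 - fEx p.2) / (2 + |p.1| + |p.2|)) = 1 ∧
    ∀ c : ℝ,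
      (⨆ x : ℝ, |fEx x + c| / (1 + |x|)) =
          (⨆ p : ℝ × ℝ, (fEx p.1 - fEx p.2) / (2 + |p.1| + |p.2|)) ↔
        c ∈ Set.Icc (-1 : ℝ) 1 := by
  have hub : ∀ p : ℝ × ℝ, (fEx p.1 - fEx p.2) / (2 + |p.1| + |p.2|) ≤ 1 := by
    intro p
    have hd : 0 < 2 + |p.1| + |p.2| := by positivity
    rw [div_le_one hd]
    have h1 := fEx_le p.1
    have h2 := fEx_ge p.2
    have h3 := abs_nonneg p.2
    linarith
  have hbdd : BddAbove (Set.range fun p : ℝ × ℝ =>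
      (fEx p.1 - fEx p.2) / (2 + |p.1| + |p.2|)) := by
    refine ⟨1, ?_⟩; rintro _ ⟨p, rfl⟩; exact hub p
  have h1 : (⨆ p : ℝ × ℝ, (fEx p.1 - fEx p.2) / (2 + |p.1| + |p.2|)) = 1 := by
    refine le_antisymm (ciSup_le hub) ?_
    refine le_of_forall_lt fun w hw => ?_
    rw [lt_ciSup_iff hbdd]
    set x : ℝ := max 2 ((1 + 3 * w) / (1 - w) + 1) with hxdef
    have hx2 : (2:ℝ) ≤ x := le_max_left _ _
    have h1w : 0 < 1 - w := by linarith
    have hxw : (1 + 3 * w) / (1 - w) < x :=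
      lt_of_lt_of_le (lt_add_one _) (le_max_right _ _)
    have hx' : 1 + 3 * w < x * (1 - w) := by
      rw [div_lt_iff₀ h1w] at hxw; linarith
    refine ⟨(x, 1), ?_⟩
    simp only [fEx_one]
    have habs : |x| = x := abs_of_nonneg (by linarith)
    have hfx : x - 1 ≤ fEx x := by have := fEx_ge x; rwa [habs] at this
    rw [lt_div_iff₀ (by rw [habs]; norm_num; linarith)]
    rw [habs, abs_one]
    nlinarith
  refine ⟨h1, fun c => ?_⟩
  rw [h1]
  have hbddc : BddAbove (Set.range fun x : ℝ => |fEx x + c| / (1 + |x|)) := by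
    refine ⟨1 + |c|, ?_⟩
    rintro _ ⟨x, rfl⟩
    have hd : 0 < 1 + |x| := by positivity
    rw [div_le_iff₀ hd]
    have h1 := fEx_le x
    have h2 := fEx_nonneg x
    have h3 := abs_nonneg x
    have h4 := abs_nonneg c
    have h5 : |fEx x + c| ≤ fEx x + |c| := by
      calc |fEx x + c| ≤ |fEx x| + |c| := abs_add_le _ _
        _ = fEx x + |c| := by rw [abs_of_nonneg h2]
    nlinarith
  constructor
  · intro hsup
    by_contra hc
    simp only [Set.mem_Icc, not_and_or, not_le] at hc
    have hkey : |c| ≤ (⨆ x : ℝ, |fEx x + c| / (1 + |x|)) := by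
      have := le_ciSup hbddc (0 : ℝ)
      simpa [fEx_zero] using this
    rw [hsup] at hkey
    rcases hc with hc | hc
    · have : 1 < |c| := by rw [abs_of_neg (by linarith)]; linarith
      linarith
    · have : 1 < |c| := by rw [abs_of_pos (by linarith)]; linarith
      linarith
  · rintro ⟨hc1, hc2⟩
    refine le_antisymm (ciSup_le fun x => ?_) ?_
    · have hd : 0 < 1 + |x| := by positivity
      rw [div_le_one hd]
      have h1 := fEx_le x
      have h2 := fEx_nonneg x
      have h3 := abs_nonneg x
      rw [abs_le]; constructor <;> linarith
    · refine le_of_forall_lt fun w hw => ?_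
      rw [lt_ciSup_iff hbddc]
      set x : ℝ := max 2 ((w + 2) / (1 - w) + 1) with hxdef
      have hx2 : (2:ℝ) ≤ x := le_max_left _ _
      have h1w : 0 < 1 - w := by linarith
      have hxw : (w + 2) / (1 - w) < x :=
        lt_of_lt_of_le (lt_add_one _) (le_max_right _ _)
      have hx' : w + 2 < x * (1 - w) := by
        rw [div_lt_iff₀ h1w] at hxw; linarith
      refine ⟨x, ?_⟩
      have habs : |x| = x := abs_of_nonneg (by linarith)
      have hfx : x - 1 ≤ fEx x := by have := fEx_ge x; rwa [habs] at this
      have hpos : 0 ≤ fEx x + c := by linarith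
      rw [habs, abs_of_nonneg hpos, lt_div_iff₀ (by linarith)]
      nlinarith
end

section
/- Under assumptions (A.1)–(A.4), for γ < 0 the Bellman operator T_γ f(x) = inf_{h∈U} log E[exp(γF(x,h,W₀) + f(G(x,W₀)))] maps C_ω(ℝ^k) into itself: if ‖f‖_ω < ∞ and f continuous, then T_γ f is continuous with ‖T_γ f‖_ω < ∞. -/
open MeasureTheory ProbabilityTheory Real Set

/-- The Bellman operator T_γ f(x) = inf_{h ∈ U} log E[exp(γF(x,h,W₀) + f(G(x,W₀)))]. -/
noncomputable def bellmanT {Ω : Type*} [MeasureSpace Ω] {k m d : ℕ}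
    (γ : ℝ) (U : Set (Fin m → ℝ)) (W₀ : Ω → Fin d → ℝ)
    (G : (Fin k → ℝ) → (Fin d → ℝ) → Fin k → ℝ)
    (F : (Fin k → ℝ) → (Fin m → ℝ) → (Fin d → ℝ) → ℝ)
    (f : (Fin k → ℝ) → ℝ) (x : Fin k → ℝ) : ℝ :=
  sInf ((fun h => Real.log
    (∫ ω', Real.exp (γ * F x h (W₀ ω') + f (G x (W₀ ω'))))) '' U)

theorem stmt12 {Ω : Type*} [MeasureSpace Ω] [IsProbabilityMeasure (ℙ : Measure Ω)]
    (k m d : ℕ) (γ : ℝ) (hγ : γ < 0)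
    (U : Set (Fin m → ℝ)) (hU : IsCompact U) (hUne : U.Nonempty)
    (W₀ : Ω → Fin d → ℝ) (hW₀ : Measurable W₀)
    (G : (Fin k → ℝ) → (Fin d → ℝ) → Fin k → ℝ)
    (hGmeas : Measurable (Function.uncurry G))
    (hGcont : ∀ w, Continuous fun x => G x w)
    (F : (Fin k → ℝ) → (Fin m → ℝ) → (Fin d → ℝ) → ℝ)
    (hFmeas : Measurable fun p : ((Fin k → ℝ) × (Fin m → ℝ)) × (Fin d → ℝ) =>
      F p.1.1 p.1.2 p.2)
    (hFcont : ∀ w, Continuous fun p : (Fin k → ℝ) × (Fin m → ℝ) => F p.1 p.2 w)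
    (ω : (Fin k → ℝ) → ℝ) (hωc : Continuous ω) (hω0 : ∀ x, 0 ≤ ω x)
    (a₁ a₂ : (Fin d → ℝ) → ℝ) (ha₁ : ∀ w, 0 ≤ a₁ w) (ha₂ : ∀ w, 0 ≤ a₂ w)
    (b₁ b₂ : ℝ) (hb₁ : 0 < b₁) (hb₁' : b₁ < 1) (hb₂ : 0 < b₂)
    (hG : ∀ x w, ω (G x w) ≤ a₁ w + b₁ * ω x)
    (hF : ∀ x h w, |F x h w| ≤ a₂ w + b₂ * ω x)
    (hmom : ∀ c : ℝ,
      Integrable (fun ω' => Real.exp (c * a₁ (W₀ ω'))) ∧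
        Integrable (fun ω' => Real.exp (c * a₂ (W₀ ω'))))
    (f : (Fin k → ℝ) → ℝ) (hfc : Continuous f)
    (hfb : BddAbove (Set.range fun x => |f x| / (1 + ω x))) :
    Continuous (bellmanT γ U W₀ G F f) ∧
    BddAbove (Set.range fun x => |bellmanT γ U W₀ G F f x| / (1 + ω x)) := by
  classical
  -- bound for f
  obtain ⟨M₀, hM₀⟩ := hfb
  set M : ℝ := max M₀ 0 with hMdef
  have hM0 : 0 ≤ M := le_max_right _ _
  have hωpos : ∀ x : Fin k → ℝ, (0 : ℝ) < 1 + ω x := fun x => by linarith [hω0 x]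
  have hMf : ∀ x, |f x| ≤ M * (1 + ω x) := by
    intro x
    have h1 : |f x| / (1 + ω x) ≤ M₀ := hM₀ ⟨x, rfl⟩
    have := (div_le_iff₀ (hωpos x)).1 (h1.trans (le_max_left M₀ 0))
    linarith
  -- constants
  set c : ℝ := |γ| * b₂ + M * (1 + b₁) with hcdef
  have hc : 0 ≤ c := by positivity
  set A : Ω → ℝ := fun ω' => |γ| * a₂ (W₀ ω') + M * a₁ (W₀ ω') with hAdef
  have hA0 : ∀ ω', 0 ≤ A ω' := fun ω' => by
    have := ha₁ (W₀ ω'); have := ha₂ (W₀ ω'); positivity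
  -- key pointwise estimate
  have key : ∀ (x : Fin k → ℝ) (h : Fin m → ℝ) (ω' : Ω),
      |γ * F x h (W₀ ω') + f (G x (W₀ ω'))| ≤ A ω' + c * (1 + ω x) := by
    intro x h ω'
    have h1 : |γ * F x h (W₀ ω')| ≤ |γ| * (a₂ (W₀ ω') + b₂ * ω x) := by
      rw [abs_mul]
      exact mul_le_mul_of_nonneg_left (hF x h (W₀ ω')) (abs_nonneg γ)
    have h2 : |f (G x (W₀ ω'))| ≤ M * (1 + (a₁ (W₀ ω') + b₁ * ω x)) := by
      refine (hMf _).trans (mul_le_mul_of_nonneg_left ?_ hM0)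
      have := hG x (W₀ ω'); linarith
    have h3 := (abs_add_le (γ * F x h (W₀ ω')) (f (G x (W₀ ω')))).trans (add_le_add h1 h2)
    have hγ0 : 0 ≤ |γ| := abs_nonneg γ
    have := hω0 x
    simp only [hAdef, hcdef]
    nlinarith [mul_nonneg hM0 (hω0 x), mul_nonneg hγ0 hb₂.le, mul_nonneg hM0 hb₁.le]
  -- a.e. strong measurability of exp(±A)
  have hexpA_aesm : AEStronglyMeasurable (fun ω' => Real.exp (A ω')) ℙ := by
    have h1 := (hmom |γ|).2.aestronglyMeasurable
    have h2 := (hmom M).1.aestronglyMeasurable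
    have := h1.mul h2
    refine this.congr (Filter.Eventually.of_forall fun ω' => ?_)
    simp [hAdef, Real.exp_add]
  have hexpA_aesm' : AEStronglyMeasurable (fun ω' => Real.exp (-A ω')) ℙ := by
    have h1 := (hmom (-|γ|)).2.aestronglyMeasurable
    have h2 := (hmom (-M)).1.aestronglyMeasurable
    have := h1.mul h2
    refine this.congr (Filter.Eventually.of_forall fun ω' => ?_)
    simp [hAdef, ← Real.exp_add]
    ring_nf
  -- integrability of exp A
  have hAint : Integrable (fun ω' => Real.exp (A ω')) := by
    have h1 := (hmom (2 * |γ|)).2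
    have h2 := (hmom (2 * M)).1
    refine ((h1.add h2).div_const 2).mono' hexpA_aesm
      (Filter.Eventually.of_forall fun ω' => ?_)
    rw [Real.norm_eq_abs, abs_of_pos (Real.exp_pos _)]
    have hu : Real.exp (A ω') = Real.exp (|γ| * a₂ (W₀ ω')) * Real.exp (M * a₁ (W₀ ω')) := by
      rw [← Real.exp_add]
    have e1 : Real.exp (2 * |γ| * a₂ (W₀ ω')) = Real.exp (|γ| * a₂ (W₀ ω')) ^ 2 := by
      rw [← Real.exp_nat_mul]; ring_nf
    have e2 : Real.exp (2 * M * a₁ (W₀ ω')) = Real.exp (M * a₁ (W₀ ω')) ^ 2 := by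
      rw [← Real.exp_nat_mul]; ring_nf
    simp only [Pi.add_apply]
    rw [hu, e1, e2]
    nlinarith [sq_nonneg (Real.exp (|γ| * a₂ (W₀ ω')) - Real.exp (M * a₁ (W₀ ω')))]
  -- integrability of exp (-A)
  have hAint' : Integrable (fun ω' => Real.exp (-A ω')) := by
    refine (integrable_const (1 : ℝ)).mono' hexpA_aesm'
      (Filter.Eventually.of_forall fun ω' => ?_)
    rw [Real.norm_eq_abs, abs_of_pos (Real.exp_pos _)]
    exact Real.exp_le_one_iff.2 (by linarith [hA0 ω'])
  -- measurability of the integrand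
  have hImeas : ∀ p : (Fin k → ℝ) × (Fin m → ℝ),
      Measurable fun ω' => Real.exp (γ * F p.1 p.2 (W₀ ω') + f (G p.1 (W₀ ω'))) := by
    intro p
    have hFW : Measurable fun ω' => F p.1 p.2 (W₀ ω') :=
      hFmeas.comp (measurable_const.prodMk hW₀)
    have hfG : Measurable fun ω' => f (G p.1 (W₀ ω')) :=
      hfc.measurable.comp (hGmeas.comp (measurable_const.prodMk hW₀))
    exact ((hFW.const_mul γ).add hfG).exp
  -- integrability of the integrand
  have hIint : ∀ p : (Fin k → ℝ) × (Fin m → ℝ),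
      Integrable (fun ω' => Real.exp (γ * F p.1 p.2 (W₀ ω') + f (G p.1 (W₀ ω')))) := by
    intro p
    refine (hAint.mul_const (Real.exp (c * (1 + ω p.1)))).mono'
      (hImeas p).aestronglyMeasurable (Filter.Eventually.of_forall fun ω' => ?_)
    rw [Real.norm_eq_abs, abs_of_pos (Real.exp_pos _), ← Real.exp_add]
    exact Real.exp_le_exp.2 (le_trans (le_abs_self _) (key p.1 p.2 ω'))
  -- positivity of integrals of everywhere-positive integrable functions
  have posInt : ∀ g : Ω → ℝ, (∀ ω', 0 < g ω') → Integrable g → 0 < ∫ ω', g ω' := by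
    intro g hg hgi
    rw [integral_pos_iff_support_of_nonneg_ae
      (Filter.Eventually.of_forall fun ω' => (hg ω').le) hgi]
    have hsupp : Function.support g = Set.univ := by
      ext ω'; simp [Function.mem_support, (hg ω').ne']
    rw [hsupp, measure_univ]; exact zero_lt_one
  have hgpos : ∀ p : (Fin k → ℝ) × (Fin m → ℝ),
      0 < ∫ ω', Real.exp (γ * F p.1 p.2 (W₀ ω') + f (G p.1 (W₀ ω'))) :=
    fun p => posInt _ (fun ω' => Real.exp_pos _) (hIint p)
  set J : ℝ := ∫ ω', Real.exp (A ω') with hJdef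
  set J' : ℝ := ∫ ω', Real.exp (-A ω') with hJ'def
  have hJpos : 0 < J := posInt _ (fun ω' => Real.exp_pos _) hAint
  have hJ'pos : 0 < J' := posInt _ (fun ω' => Real.exp_pos _) hAint'
  -- upper and lower bounds for log of the integral
  have hup : ∀ p : (Fin k → ℝ) × (Fin m → ℝ),
      Real.log (∫ ω', Real.exp (γ * F p.1 p.2 (W₀ ω') + f (G p.1 (W₀ ω'))))
        ≤ Real.log J + c * (1 + ω p.1) := by
    intro p
    have hle : (∫ ω', Real.exp (γ * F p.1 p.2 (W₀ ω') + f (G p.1 (W₀ ω'))))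
        ≤ J * Real.exp (c * (1 + ω p.1)) := by
      have : (∫ ω', Real.exp (A ω') * Real.exp (c * (1 + ω p.1)))
          = J * Real.exp (c * (1 + ω p.1)) := integral_mul_const _ _
      rw [← this]
      refine integral_mono (hIint p) (hAint.mul_const _) fun ω' => ?_
      rw [← Real.exp_add]
      exact Real.exp_le_exp.2 (le_trans (le_abs_self _) (key p.1 p.2 ω'))
    calc Real.log (∫ ω', Real.exp (γ * F p.1 p.2 (W₀ ω') + f (G p.1 (W₀ ω'))))
        ≤ Real.log (J * Real.exp (c * (1 + ω p.1))) :=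
          Real.log_le_log (hgpos p) hle
      _ = Real.log J + c * (1 + ω p.1) := by
          rw [Real.log_mul hJpos.ne' (Real.exp_pos _).ne', Real.log_exp]
  have hlow : ∀ p : (Fin k → ℝ) × (Fin m → ℝ),
      Real.log J' - c * (1 + ω p.1)
        ≤ Real.log (∫ ω', Real.exp (γ * F p.1 p.2 (W₀ ω') + f (G p.1 (W₀ ω')))) := by
    intro p
    have hle : J' * Real.exp (-(c * (1 + ω p.1)))
        ≤ ∫ ω', Real.exp (γ * F p.1 p.2 (W₀ ω') + f (G p.1 (W₀ ω'))) := by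
      have heq : (∫ ω', Real.exp (-A ω') * Real.exp (-(c * (1 + ω p.1))))
          = J' * Real.exp (-(c * (1 + ω p.1))) := integral_mul_const _ _
      rw [← heq]
      refine integral_mono (hAint'.mul_const _) (hIint p) fun ω' => ?_
      rw [← Real.exp_add]
      refine Real.exp_le_exp.2 ?_
      have := (abs_le.1 (key p.1 p.2 ω')).1
      linarith
    have hpos' : 0 < J' * Real.exp (-(c * (1 + ω p.1))) :=
      mul_pos hJ'pos (Real.exp_pos _)
    calc Real.log J' - c * (1 + ω p.1)
        = Real.log (J' * Real.exp (-(c * (1 + ω p.1)))) := by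
          rw [Real.log_mul hJ'pos.ne' (Real.exp_pos _).ne', Real.log_exp]; ring
      _ ≤ _ := Real.log_le_log hpos' hle
  -- joint continuity of the log-integral
  have hLcont : Continuous fun p : (Fin k → ℝ) × (Fin m → ℝ) =>
      Real.log (∫ ω', Real.exp (γ * F p.1 p.2 (W₀ ω') + f (G p.1 (W₀ ω')))) := by
    rw [continuous_iff_continuousAt]
    intro p₀
    have hIcont : ContinuousAt (fun p : (Fin k → ℝ) × (Fin m → ℝ) =>
        ∫ ω', Real.exp (γ * F p.1 p.2 (W₀ ω') + f (G p.1 (W₀ ω')))) p₀ := by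
      obtain ⟨y, hy, hKmax⟩ := (isCompact_closedBall p₀.1 1).exists_isMaxOn
        ⟨p₀.1, Metric.mem_closedBall_self zero_le_one⟩ hωc.continuousOn
      refine continuousAt_of_dominated
        (Filter.Eventually.of_forall fun p => (hImeas p).aestronglyMeasurable)
        ?_ (hAint.mul_const (Real.exp (c * (1 + ω y))))
        (Filter.Eventually.of_forall fun ω' => ?_)
      · have hmem : (fun p : (Fin k → ℝ) × (Fin m → ℝ) => p.1) ⁻¹'
            Metric.closedBall p₀.1 1 ∈ nhds p₀ :=
          continuous_fst.continuousAt.preimage_mem_nhds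
            (Metric.closedBall_mem_nhds p₀.1 one_pos)
        refine Filter.eventually_of_mem hmem fun p hp => ?_
        refine Filter.Eventually.of_forall fun ω' => ?_
        rw [Real.norm_eq_abs, abs_of_pos (Real.exp_pos _), ← Real.exp_add]
        refine Real.exp_le_exp.2 ?_
        have h1 := le_trans (le_abs_self _) (key p.1 p.2 ω')
        have h2 : ω p.1 ≤ ω y := hKmax hp
        nlinarith
      · exact ((Real.continuous_exp.comp
          ((continuous_const.mul (hFcont (W₀ ω'))).add
            (hfc.comp ((hGcont (W₀ ω')).comp continuous_fst)))).continuousAt)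
    exact ContinuousAt.comp (x := p₀)
      (f := fun p : (Fin k → ℝ) × (Fin m → ℝ) => ∫ ω', Real.exp (γ * F p.1 p.2 (W₀ ω') + f (G p.1 (W₀ ω'))))
      (Real.continuousAt_log (hgpos p₀).ne') hIcont
  constructor
  · -- continuity of the Bellman operator
    exact hU.continuous_sInf (f := fun x (h : Fin m → ℝ) => Real.log
      (∫ ω', Real.exp (γ * F x h (W₀ ω') + f (G x (W₀ ω'))))) hLcont
  · -- boundedness
    refine ⟨|Real.log J| + |Real.log J'| + c, ?_⟩
    rintro r ⟨x, rfl⟩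
    have hbddS : BddBelow ((fun h => Real.log
        (∫ ω', Real.exp (γ * F x h (W₀ ω') + f (G x (W₀ ω'))))) '' U) := by
      refine ⟨Real.log J' - c * (1 + ω x), ?_⟩
      rintro r ⟨h₀, _, rfl⟩
      exact hlow (x, h₀)
    obtain ⟨h₀, hh₀⟩ := hUne
    have hTle : bellmanT γ U W₀ G F f x ≤ Real.log J + c * (1 + ω x) :=
      (csInf_le hbddS (Set.mem_image_of_mem _ hh₀)).trans (hup (x, h₀))
    have hTge : Real.log J' - c * (1 + ω x) ≤ bellmanT γ U W₀ G F f x := by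
      refine le_csInf ⟨_, Set.mem_image_of_mem _ hh₀⟩ ?_
      rintro r ⟨h₁, _, rfl⟩
      exact hlow (x, h₁)
    rw [div_le_iff₀ (hωpos x)]
    rw [abs_le]
    constructor
    · have h1 : -|Real.log J'| ≤ Real.log J' := neg_abs_le _
      have h2 := hω0 x
      have h3 : (0:ℝ) ≤ |Real.log J| := abs_nonneg _
      have h4 : (0:ℝ) ≤ |Real.log J'| := abs_nonneg _
      nlinarith
    · have h1 : Real.log J ≤ |Real.log J| := le_abs_self _
      have h2 := hω0 x
      have h3 : (0:ℝ) ≤ |Real.log J| := abs_nonneg _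
      have h4 : (0:ℝ) ≤ |Real.log J'| := abs_nonneg _
      nlinarith
end

section
/- (Lower bound on Esscher-transformed probabilities via Cauchy–Schwarz) Let Z be a real random variable with e^{Z}, e^{−Z} ∈ L¹ and A an event. Then E[1_A e^{Z}]/E[e^{Z}] ≥ P(A)² / (E[e^{Z}] E[e^{−Z}]). In particular, combined with the bound ‖f+a‖_ω ≤ M for suitable a, one gets for Z = γF(x,h,W₀)+f(G(x,W₀)): Q̄_{(x,f,h)}(A) ≥ E[1_{G(x,W₀)∈A}]² / (e^{2[(Mb₁−γb₂)ω(x)+M]} E[e^{Ma₁(W₀)−γa₂(W₀)}]²). -/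
open MeasureTheory Real Set

/-! By Cauchy–Schwarz, `μ(A)² = (∫_A e^{Z/2} e^{-Z/2})² ≤ ∫_A e^Z · ∫ e^{-Z}`; dividing by
`E[e^Z] E[e^{-Z}]` gives the first bound. Under (A.4), with `g = M a₁(W₀) - γ a₂(W₀)` and
`C = (M b₁ - γ b₂) ω(x) + M`, the exponent satisfies `|Z + a| ≤ g + C`, so
`E[e^Z] E[e^{-Z}] ≤ e^{C-a} E[e^g] · e^{C+a} E[e^g] = e^{2C} E[e^g]²`, which turns the first bound
into the second. -/

section Esscher

variable {Ω : Type*} [MeasurableSpace Ω] {μ : Measure Ω} {Z : Ω → ℝ}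

/-- Cauchy–Schwarz for `e^{Z/2}` and `e^{-Z/2}`, proved via the discriminant of the nonnegative
quadratic `t ↦ ∫ (t e^{Z/2} + e^{-Z/2})²`. -/
theorem sq_measureReal_univ_le_integral_exp_mul_integral_exp_neg [IsFiniteMeasure μ]
    (hZ : Integrable (fun ω => exp (Z ω)) μ) (hZneg : Integrable (fun ω => exp (-Z ω)) μ) :
    μ.real univ ^ 2 ≤ (∫ ω, exp (Z ω) ∂μ) * ∫ ω, exp (-Z ω) ∂μ := by
  have hquad : ∀ t : ℝ, 0 ≤ (∫ ω, exp (Z ω) ∂μ) * (t * t) + 2 * μ.real univ * t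
      + ∫ ω, exp (-Z ω) ∂μ := by
    intro t
    have hsq : ∀ ω, t * t * exp (Z ω) + 2 * t + exp (-Z ω)
        = (t * exp (Z ω / 2) + exp (-Z ω / 2)) ^ 2 := by
      intro ω
      have h1 : exp (Z ω / 2) ^ 2 = exp (Z ω) := by rw [← exp_nat_mul]; ring_nf
      have h2 : exp (-Z ω / 2) ^ 2 = exp (-Z ω) := by rw [← exp_nat_mul]; ring_nf
      have h3 : exp (Z ω / 2) * exp (-Z ω / 2) = 1 := by rw [← exp_add]; ring_nf; exact exp_zero
      linear_combination (-(t * t)) * h1 - h2 - 2 * t * h3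
    have hnonneg : 0 ≤ ∫ ω, t * t * exp (Z ω) + 2 * t + exp (-Z ω) ∂μ :=
      integral_nonneg fun ω => (hsq ω).symm ▸ sq_nonneg _
    have hint : Integrable (fun ω => t * t * exp (Z ω) + 2 * t) μ :=
      (hZ.const_mul _).add (integrable_const _)
    rw [integral_add hint hZneg, integral_add (hZ.const_mul _) (integrable_const _),
      integral_const_mul,
      integral_const, smul_eq_mul] at hnonneg
    linarith
  have := discrim_le_zero hquad
  rw [discrim] at this
  nlinarith

theorem sq_measureReal_div_le_setIntegral_exp_div [IsFiniteMeasure μ]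
    (hZ : Integrable (fun ω => exp (Z ω)) μ) (hZneg : Integrable (fun ω => exp (-Z ω)) μ)
    (A : Set Ω) :
    μ.real A ^ 2 / ((∫ ω, exp (Z ω) ∂μ) * ∫ ω, exp (-Z ω) ∂μ) ≤
      (∫ ω in A, exp (Z ω) ∂μ) / ∫ ω, exp (Z ω) ∂μ := by
  have hA : μ.real A ^ 2 ≤ (∫ ω in A, exp (Z ω) ∂μ) * ∫ ω, exp (-Z ω) ∂μ := by
    calc μ.real A ^ 2
        ≤ (∫ ω in A, exp (Z ω) ∂μ) * ∫ ω in A, exp (-Z ω) ∂μ := by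
          simpa only [measureReal_restrict_apply_univ] using
            sq_measureReal_univ_le_integral_exp_mul_integral_exp_neg hZ.restrict hZneg.restrict
      _ ≤ (∫ ω in A, exp (Z ω) ∂μ) * ∫ ω, exp (-Z ω) ∂μ :=
          mul_le_mul_of_nonneg_left
            (setIntegral_le_integral hZneg (.of_forall fun _ => (exp_pos _).le))
            (integral_nonneg fun _ => (exp_pos _).le)
  calc μ.real A ^ 2 / ((∫ ω, exp (Z ω) ∂μ) * ∫ ω, exp (-Z ω) ∂μ)
      ≤ (∫ ω in A, exp (Z ω) ∂μ) * (∫ ω, exp (-Z ω) ∂μ)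
          / ((∫ ω, exp (Z ω) ∂μ) * ∫ ω, exp (-Z ω) ∂μ) :=
        div_le_div_of_nonneg_right hA
          (mul_nonneg (integral_nonneg fun _ => (exp_pos _).le)
            (integral_nonneg fun _ => (exp_pos _).le))
    _ ≤ (∫ ω in A, exp (Z ω) ∂μ) / ∫ ω, exp (Z ω) ∂μ := by
        rcases (integral_nonneg fun ω => (exp_pos (-Z ω)).le : 0 ≤ ∫ ω, exp (-Z ω) ∂μ).eq_or_lt
          with h0 | hpos
        · simpa [← h0] using div_nonneg (integral_nonneg fun ω => (exp_pos (Z ω)).le)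
            (integral_nonneg fun ω => (exp_pos (Z ω)).le)
        · rw [mul_div_mul_right _ _ hpos.ne']

theorem integral_exp_mul_integral_exp_neg_le_of_abs_add_le {g : Ω → ℝ} {a C : ℝ}
    (hZ : Integrable (fun ω => exp (Z ω)) μ) (hZneg : Integrable (fun ω => exp (-Z ω)) μ)
    (hg : Integrable (fun ω => exp (g ω)) μ) (hbound : ∀ ω, |Z ω + a| ≤ g ω + C) :
    (∫ ω, exp (Z ω) ∂μ) * ∫ ω, exp (-Z ω) ∂μ ≤ exp (2 * C) * (∫ ω, exp (g ω) ∂μ) ^ 2 := by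
  have hexp : ∫ ω, exp (Z ω) ∂μ ≤ exp (C - a) * ∫ ω, exp (g ω) ∂μ := by
    rw [← integral_const_mul]
    refine integral_mono hZ (hg.const_mul _) fun ω => ?_
    rw [← exp_add]
    exact exp_le_exp.2 (by linarith [(abs_le.1 (hbound ω)).2])
  have hexp_neg : ∫ ω, exp (-Z ω) ∂μ ≤ exp (C + a) * ∫ ω, exp (g ω) ∂μ := by
    rw [← integral_const_mul]
    refine integral_mono hZneg (hg.const_mul _) fun ω => ?_
    rw [← exp_add]
    exact exp_le_exp.2 (by linarith [(abs_le.1 (hbound ω)).1])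
  calc (∫ ω, exp (Z ω) ∂μ) * ∫ ω, exp (-Z ω) ∂μ
      ≤ (exp (C - a) * ∫ ω, exp (g ω) ∂μ) * (exp (C + a) * ∫ ω, exp (g ω) ∂μ) :=
        mul_le_mul hexp hexp_neg (integral_nonneg fun _ => (exp_pos _).le)
          (mul_nonneg (exp_pos _).le (integral_nonneg fun _ => (exp_pos _).le))
    _ = exp (2 * C) * (∫ ω, exp (g ω) ∂μ) ^ 2 := by
        rw [mul_mul_mul_comm, ← exp_add, ← sq, show C - a + (C + a) = 2 * C by ring]

end Esscher

theorem abs_mul_add_add_le_of_growth {X H W : Type*} {ω : X → ℝ} {G : X → W → X}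
    {F : X → H → W → ℝ} {a₁ a₂ : W → ℝ} {f : X → ℝ} {γ M b₁ b₂ a : ℝ} (hγ : γ ≤ 0)
    (hM : 0 ≤ M) (hG : ∀ z w, ω (G z w) ≤ a₁ w + b₁ * ω z)
    (hF : ∀ z h' w, |F z h' w| ≤ a₂ w + b₂ * ω z) (hf : ∀ z, |f z + a| ≤ M * (1 + ω z))
    (x : X) (h : H) (w : W) :
    |γ * F x h w + f (G x w) + a| ≤ M * a₁ w - γ * a₂ w + ((M * b₁ - γ * b₂) * ω x + M) := by
  have hγF : |γ * F x h w| ≤ -γ * (a₂ w + b₂ * ω x) := by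
    rw [abs_mul, abs_of_nonpos hγ]
    exact mul_le_mul_of_nonneg_left (hF x h w) (neg_nonneg.2 hγ)
  have hfG : |f (G x w) + a| ≤ M * (1 + (a₁ w + b₁ * ω x)) :=
    (hf _).trans (mul_le_mul_of_nonneg_left (by linarith [hG x w]) hM)
  calc |γ * F x h w + f (G x w) + a|
      ≤ |γ * F x h w| + |f (G x w) + a| := by rw [add_assoc]; exact abs_add_le _ _
    _ ≤ _ := by linarith

theorem stmt18 {Ω : Type*} [MeasurableSpace Ω] (P : Measure Ω)
    [IsProbabilityMeasure P] :
    -- Generic Cauchy–Schwarz lower bound for Esscher-transformed probabilities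
    (∀ (Z : Ω → ℝ), Measurable Z →
      Integrable (fun ω => Real.exp (Z ω)) P →
      Integrable (fun ω => Real.exp (-Z ω)) P →
      ∀ A : Set Ω, MeasurableSet A →
        (P A).toReal ^ 2 /
            ((∫ ω, Real.exp (Z ω) ∂P) * ∫ ω, Real.exp (-Z ω) ∂P) ≤
          (∫ ω in A, Real.exp (Z ω) ∂P) / ∫ ω, Real.exp (Z ω) ∂P) ∧
    -- Particular case Z = γF(x,h,W₀) + f(G(x,W₀)) under (A.4)
    (∀ (k m d : ℕ) (γ M b₁ b₂ a : ℝ)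
        (ω : (Fin k → ℝ) → ℝ)
        (G : (Fin k → ℝ) → (Fin d → ℝ) → Fin k → ℝ)
        (F : (Fin k → ℝ) → (Fin m → ℝ) → (Fin d → ℝ) → ℝ)
        (a₁ a₂ : (Fin d → ℝ) → ℝ)
        (f : (Fin k → ℝ) → ℝ) (x : Fin k → ℝ) (h : Fin m → ℝ)
        (W₀ : Ω → Fin d → ℝ), Measurable W₀ → γ < 0 →
      (∀ z, 0 ≤ ω z) →
      (∀ z w, ω (G z w) ≤ a₁ w + b₁ * ω z) →
      (∀ z h' w, |F z h' w| ≤ a₂ w + b₂ * ω z) →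
      (∀ z, |f z + a| ≤ M * (1 + ω z)) →
      Integrable (fun ω' =>
        Real.exp (γ * F x h (W₀ ω') + f (G x (W₀ ω')))) P →
      Integrable (fun ω' =>
        Real.exp (-(γ * F x h (W₀ ω') + f (G x (W₀ ω'))))) P →
      Integrable (fun ω' =>
        Real.exp (M * a₁ (W₀ ω') - γ * a₂ (W₀ ω'))) P →
      ∀ A : Set (Fin k → ℝ), MeasurableSet A →
        (P {ω' | G x (W₀ ω') ∈ A}).toReal ^ 2 /
            (Real.exp (2 * ((M * b₁ - γ * b₂) * ω x + M)) *
              (∫ ω', Real.exp (M * a₁ (W₀ ω') - γ * a₂ (W₀ ω')) ∂P) ^ 2) ≤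
          (∫ ω' in {ω' | G x (W₀ ω') ∈ A},
              Real.exp (γ * F x h (W₀ ω') + f (G x (W₀ ω'))) ∂P) /
            ∫ ω', Real.exp (γ * F x h (W₀ ω') + f (G x (W₀ ω'))) ∂P) := by
  refine ⟨fun Z _ hZ hZneg A _ => sq_measureReal_div_le_setIntegral_exp_div hZ hZneg A, ?_⟩
  intro k m d γ M b₁ b₂ a ω G F a₁ a₂ f x h W₀ _ hγ hω hG hF hfa hZ hZneg hg A _
  have hM : 0 ≤ M := by
    nlinarith [(abs_nonneg (f x + a)).trans (hfa x), hω x]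
  have hprod := integral_exp_mul_integral_exp_neg_le_of_abs_add_le hZ hZneg hg
    fun ω' => abs_mul_add_add_le_of_growth hγ.le hM hG hF hfa x h (W₀ ω')
  calc _ ≤ P.real {ω' | G x (W₀ ω') ∈ A} ^ 2 /
          ((∫ ω', exp (γ * F x h (W₀ ω') + f (G x (W₀ ω'))) ∂P) *
            ∫ ω', exp (-(γ * F x h (W₀ ω') + f (G x (W₀ ω')))) ∂P) :=
        div_le_div_of_nonneg_left (sq_nonneg _)
          (mul_pos (integral_exp_pos hZ) (integral_exp_pos hZneg)) hprod
    _ ≤ _ := sq_measureReal_div_le_setIntegral_exp_div hZ hZneg _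
end
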